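/- arXiv:math-ph/0110035 — 2 statements merged into one kernel-verified Lean document; each statement's English description precedes it below -/
import Mathlib

section
/- Let H be a complex Hilbert space. The map σ ↦ f_σ is a bijection from the set of spectral families in L(H) onto the set of observable functions on H ∖ {0}. Moreover, f_σ takes only finite values (i.e., f_σ(x) < ∞ for all x ∈ H ∖ {0}) if and only if σ is bounded from above, i.e., σ(λ₁) = H for some λ₁ ∈ ℝ. -/
/-- The lattice `L(H)` of closed subspaces of the Hilbert space `H`,
ordered by inclusion. -/
abbrev ClosedSub (H : Type*) [NormedAddCommGroup H] [InnerProductSpace ℂ H] : Type _ :=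
  {U : Submodule ℂ H // IsClosed (U : Set H)}

variable {H : Type*} [NormedAddCommGroup H] [InnerProductSpace ℂ H]

instance : Top (ClosedSub H) := ⟨⟨⊤, by rw [Submodule.top_coe]; exact isClosed_univ⟩⟩

/-- A spectral family in `L(H)`. -/
def IsSpectralFamily (σ : ℝ → ClosedSub H) : Prop :=
  (∀ l m : ℝ, l ≤ m → σ l ≤ σ m) ∧
  (∀ l : ℝ, ((σ l).1 : Set H) = ⋂ m ∈ Set.Ioi l, ((σ m).1 : Set H)) ∧
  (⋂ l : ℝ, ((σ l).1 : Set H)) = {0} ∧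
  (⨆ l : ℝ, (σ l).1).topologicalClosure = ⊤

/-- The function `f_σ(x) = inf {λ : x ∈ σ(λ)}` with values in `ℝ ∪ {∞}`
(`inf ∅ = ∞`). -/
noncomputable def specFun (σ : ℝ → ClosedSub H) (x : H) : WithTop ℝ :=
  sInf ((fun r : ℝ => (r : WithTop ℝ)) '' {r : ℝ | x ∈ (σ r).1})

/-- An observable function on `H ∖ {0}`: lower semicontinuous, `f(z) ≤ max(f(x),f(y))`
whenever `z` lies in the span of `x` and `y`, and finite on a dense subset. -/
def IsObservableFunction (f : {x : H // x ≠ 0} → WithTop ℝ) : Prop :=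
  LowerSemicontinuous f ∧
  (∀ x y z : {x : H // x ≠ 0},
    (z : H) ∈ Submodule.span ℂ ({(x : H), (y : H)} : Set H) → f z ≤ max (f x) (f y)) ∧
  Dense {x : {x : H // x ≠ 0} | f x < ⊤}

section Aux

variable {σ : ℝ → ClosedSub H}

lemma bddBelow_specSet (hσ : IsSpectralFamily σ) {x : H} (hx : x ≠ 0) :
    BddBelow {r : ℝ | x ∈ (σ r).1} := by
  have : x ∉ (⋂ l : ℝ, ((σ l).1 : Set H)) := by
    rw [hσ.2.2.1]; simpa using hx
  obtain ⟨l₀, hl₀⟩ : ∃ l₀ : ℝ, x ∉ (σ l₀).1 := by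
    simpa using this
  exact ⟨l₀, fun r hr => le_of_not_gt fun h => hl₀ (hσ.1 r l₀ h.le hr)⟩

lemma specFun_le_of_mem (hσ : IsSpectralFamily σ) {x : H} (hx : x ≠ 0) {r : ℝ}
    (h : x ∈ (σ r).1) : specFun σ x ≤ r := by
  have hbdd := bddBelow_specSet hσ hx
  rw [specFun, ← WithTop.coe_sInf' ⟨r, h⟩ hbdd, WithTop.coe_le_coe]
  exact csInf_le hbdd h

lemma mem_of_specFun_le (hσ : IsSpectralFamily σ) {x : H} (hx : x ≠ 0) {r : ℝ}
    (h : specFun σ x ≤ r) : x ∈ (σ r).1 := by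
  have hne : {s : ℝ | x ∈ (σ s).1}.Nonempty := by
    by_contra hemp
    rw [Set.not_nonempty_iff_eq_empty] at hemp
    rw [specFun, hemp, Set.image_empty, WithTop.sInf_empty] at h
    exact (WithTop.coe_lt_top r).not_ge h
  have hbdd := bddBelow_specSet hσ hx
  rw [specFun, ← WithTop.coe_sInf' hne hbdd, WithTop.coe_le_coe] at h
  have hmem : x ∈ (⋂ m ∈ Set.Ioi r, ((σ m).1 : Set H)) := by
    refine Set.mem_iInter₂.2 fun m hm => ?_
    obtain ⟨l, hl, hlm⟩ := exists_lt_of_csInf_lt hne (lt_of_le_of_lt h hm)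
    exact hσ.1 l m hlm.le hl
  rw [← hσ.2.1 r] at hmem
  exact hmem

lemma specFun_le_iff (hσ : IsSpectralFamily σ) {x : H} (hx : x ≠ 0) {r : ℝ} :
    specFun σ x ≤ r ↔ x ∈ (σ r).1 :=
  ⟨mem_of_specFun_le hσ hx, specFun_le_of_mem hσ hx⟩

lemma specFun_ne_top_iff (hσ : IsSpectralFamily σ) {x : H} (hx : x ≠ 0) :
    specFun σ x ≠ ⊤ ↔ ∃ r : ℝ, x ∈ (σ r).1 := by
  constructor
  · intro h
    by_contra hc
    push_neg at hc
    have : {r : ℝ | x ∈ (σ r).1} = ∅ := Set.eq_empty_iff_forall_notMem.2 hc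
    rw [specFun, this, Set.image_empty, WithTop.sInf_empty] at h
    exact h rfl
  · rintro ⟨r, hr⟩
    exact ne_top_of_le_ne_top (WithTop.coe_ne_top) (specFun_le_of_mem hσ hx hr)

end Aux

section Obs

variable {σ : ℝ → ClosedSub H}

lemma specFun_isObservable (hσ : IsSpectralFamily σ) :
    IsObservableFunction (fun x : {x : H // x ≠ 0} => specFun σ x.1) := by
  refine ⟨?_, ?_, ?_⟩
  · -- lower semicontinuous
    rw [lowerSemicontinuous_iff_isOpen_preimage]
    intro y
    rcases eq_or_ne y ⊤ with rfl | hy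
    · convert isOpen_empty
      ext x
      simp [Set.Ioi, lt_irrefl]
    · obtain ⟨r, rfl⟩ := WithTop.ne_top_iff_exists.1 hy
      have : (fun x : {x : H // x ≠ 0} => specFun σ x.1) ⁻¹' Set.Ioi (r : WithTop ℝ)
          = (Subtype.val ⁻¹' ((σ r).1 : Set H))ᶜ := by
        ext x
        simp only [Set.mem_preimage, Set.mem_Ioi, Set.mem_compl_iff, SetLike.mem_coe]
        rw [← not_le, not_iff_not]
        exact specFun_le_iff hσ x.2
      rw [this]
      exact (IsClosed.preimage continuous_subtype_val (σ r).2).isOpen_compl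
  · -- max property
    intro x y z hz
    set m := max (specFun σ x.1) (specFun σ y.1) with hm
    rcases eq_or_ne m ⊤ with h | h
    · rw [h]; exact le_top
    · obtain ⟨r, hr⟩ := WithTop.ne_top_iff_exists.1 h
      have hxr : x.1 ∈ (σ r).1 :=
        mem_of_specFun_le hσ x.2 (hr ▸ le_max_left _ _)
      have hyr : y.1 ∈ (σ r).1 :=
        mem_of_specFun_le hσ y.2 (hr ▸ le_max_right _ _)
      have hspan : Submodule.span ℂ ({(x : H), (y : H)} : Set H) ≤ (σ r).1 :=
        Submodule.span_le.2 (by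
          rintro w (rfl | rfl)
          exacts [hxr, by simpa using hyr])
      calc specFun σ z.1 ≤ (r : WithTop ℝ) := specFun_le_of_mem hσ z.2 (hspan hz)
        _ = m := hr
  · -- dense finiteness
    rw [dense_iff_closure_eq, Set.eq_univ_iff_forall]
    intro x
    rw [closure_subtype]
    have hdense : Dense (((⨆ l : ℝ, (σ l).1 : Submodule ℂ H) : Set H)) :=
      Submodule.dense_iff_topologicalClosure_eq_top.2 hσ.2.2.2
    rw [mem_closure_iff]
    intro U hU hxU
    have hU' : IsOpen (U ∩ {y : H | y ≠ 0}) := hU.inter isOpen_ne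
    have hxU' : x.1 ∈ U ∩ {y : H | y ≠ 0} := ⟨hxU, x.2⟩
    obtain ⟨w, ⟨hwU, hw0⟩, hwsup⟩ := hdense.inter_open_nonempty _ hU' ⟨x.1, hxU'⟩
    have hdir : Directed (· ≤ ·) (fun l : ℝ => (σ l).1) :=
      fun a b => ⟨max a b, hσ.1 a (max a b) (le_max_left _ _),
        hσ.1 b (max a b) (le_max_right _ _)⟩
    obtain ⟨l, hl⟩ := (Submodule.mem_iSup_of_directed _ hdir).1 hwsup
    refine ⟨w, hwU, ⟨⟨w, hw0⟩, ?_, rfl⟩⟩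
    simp only [Set.mem_setOf_eq]
    exact lt_of_le_of_lt (specFun_le_of_mem hσ hw0 hl) (WithTop.coe_lt_top l)

end Obs

section Inv

variable {f : {x : H // x ≠ 0} → WithTop ℝ}

/-- The candidate subspace `σ_f(r)` as a set. -/
def obsSet (f : {x : H // x ≠ 0} → WithTop ℝ) (r : ℝ) : Set H :=
  {x : H | ∀ h : x ≠ 0, f ⟨x, h⟩ ≤ (r : WithTop ℝ)}

lemma obsSet_smul (hf : IsObservableFunction f) {r : ℝ} {c : ℂ} {x : H}
    (hx : x ∈ obsSet f r) : c • x ∈ obsSet f r := by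
  intro h
  have hx0 : x ≠ 0 := by
    rintro rfl; exact h (smul_zero c)
  have hmem : ((⟨c • x, h⟩ : {x : H // x ≠ 0}) : H) ∈
      Submodule.span ℂ ({(x : H), (x : H)} : Set H) := by
    simp only [Set.pair_eq_singleton]
    exact Submodule.mem_span_singleton.2 ⟨c, rfl⟩
  have := hf.2.1 ⟨x, hx0⟩ ⟨x, hx0⟩ ⟨c • x, h⟩ hmem
  rw [max_self] at this
  exact this.trans (hx hx0)

/-- The candidate subspace `σ_f(r)` as a submodule. -/
def obsSub (hf : IsObservableFunction f) (r : ℝ) : Submodule ℂ H where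
  carrier := obsSet f r
  zero_mem' := fun h => absurd rfl h
  add_mem' := by
    intro x y hx hy h
    rcases eq_or_ne x 0 with rfl | hx0
    · have hy0 : y ≠ 0 := by simpa using h
      have he : (⟨(0 : H) + y, h⟩ : {x : H // x ≠ 0}) = ⟨y, hy0⟩ := Subtype.ext (zero_add y)
      rw [he]; exact hy hy0
    rcases eq_or_ne y 0 with rfl | hy0
    · have hxx : x ≠ 0 := by simpa using h
      have he : (⟨x + (0 : H), h⟩ : {x : H // x ≠ 0}) = ⟨x, hxx⟩ := Subtype.ext (add_zero x)
      rw [he]; exact hx hxx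
    have hmem : ((⟨x + y, h⟩ : {x : H // x ≠ 0}) : H) ∈
        Submodule.span ℂ ({x, y} : Set H) :=
      Submodule.add_mem _ (Submodule.subset_span (by simp))
        (Submodule.subset_span (by simp))
    exact (hf.2.1 ⟨x, hx0⟩ ⟨y, hy0⟩ ⟨x + y, h⟩ hmem).trans
      (max_le (hx hx0) (hy hy0))
  smul_mem' := fun c x hx => obsSet_smul hf hx

lemma obsSet_isClosed (hf : IsObservableFunction f) (r : ℝ) :
    IsClosed (obsSet f r) := by
  rw [← isOpen_compl_iff]
  have : (obsSet f r)ᶜ = Subtype.val '' {x : {x : H // x ≠ 0} | (r : WithTop ℝ) < f x} := by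
    ext x
    simp only [Set.mem_compl_iff, obsSet, Set.mem_setOf_eq, not_forall, not_le, Set.mem_image]
    constructor
    · rintro ⟨h, hlt⟩; exact ⟨⟨x, h⟩, hlt, rfl⟩
    · rintro ⟨⟨y, hy⟩, hlt, rfl⟩; exact ⟨hy, hlt⟩
  rw [this]
  have hopen : IsOpen {x : {x : H // x ≠ 0} | (r : WithTop ℝ) < f x} :=
    lowerSemicontinuous_iff_isOpen_preimage.1 hf.1 r
  have : IsOpenMap (Subtype.val : {x : H // x ≠ 0} → H) :=
    (isOpen_ne : IsOpen {x : H | x ≠ 0}).isOpenMap_subtype_val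
  exact this _ hopen

/-- The spectral family associated to an observable function. -/
noncomputable def obsFam (hf : IsObservableFunction f) : ℝ → ClosedSub H :=
  fun r => ⟨obsSub hf r, obsSet_isClosed hf r⟩

lemma obsFam_isSpectral (hf : IsObservableFunction f) : IsSpectralFamily (obsFam hf) := by
  refine ⟨?_, ?_, ?_, ?_⟩
  · intro l m hlm x hx h
    exact (hx h).trans (WithTop.coe_le_coe.2 hlm)
  · intro l
    ext x
    simp only [Set.mem_iInter, Set.mem_Ioi]
    constructor
    · intro hx m hm
      exact fun h => (hx h).trans (WithTop.coe_le_coe.2 hm.le)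
    · intro hx h
      have hne : f ⟨x, h⟩ ≠ ⊤ := by
        intro htop
        have := hx (l + 1) (by linarith) h
        rw [htop] at this
        exact (WithTop.coe_lt_top (l+1)).not_ge this
      obtain ⟨b, hb⟩ := WithTop.ne_top_iff_exists.1 hne
      rw [← hb, WithTop.coe_le_coe]
      refine le_of_forall_gt_imp_ge_of_dense fun m hm => ?_
      have := hx m hm h
      rw [← hb, WithTop.coe_le_coe] at this
      exact this
  · ext x
    simp only [Set.mem_iInter, Set.mem_singleton_iff]
    constructor
    · intro hx
      by_contra h
      have hne : f ⟨x, h⟩ ≠ ⊤ := by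
        intro htop
        have := hx 0 h
        rw [htop] at this
        exact (WithTop.coe_lt_top 0).not_ge this
      obtain ⟨b, hb⟩ := WithTop.ne_top_iff_exists.1 hne
      have := hx (b - 1) h
      rw [← hb, WithTop.coe_le_coe] at this
      linarith
    · rintro rfl l h
      exact absurd rfl h
  · rw [← Submodule.dense_iff_topologicalClosure_eq_top]
    rw [dense_iff_closure_eq, Set.eq_univ_iff_forall]
    intro x
    rcases eq_or_ne x 0 with rfl | hx0
    · exact subset_closure (Submodule.zero_mem _)
    · have hx' : (⟨x, hx0⟩ : {x : H // x ≠ 0}) ∈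
          closure {y : {x : H // x ≠ 0} | f y < ⊤} := hf.2.2 _
      rw [closure_subtype] at hx'
      refine closure_mono ?_ hx'
      rintro y ⟨⟨z, hz0⟩, hz, rfl⟩
      simp only [Set.mem_setOf_eq] at hz
      obtain ⟨b, hb⟩ := WithTop.ne_top_iff_exists.1 hz.ne
      have hmem : z ∈ obsSub hf b := fun h => by
        rw [← hb]
      exact le_iSup (fun l : ℝ => (obsFam hf l).1) b hmem

end Inv

lemma specFun_obsFam {f : {x : H // x ≠ 0} → WithTop ℝ}
    (hf : IsObservableFunction f) (x : {x : H // x ≠ 0}) :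
    specFun (obsFam hf) x.1 = f x := by
  have hset : {r : ℝ | x.1 ∈ (obsFam hf r).1} = {r : ℝ | f x ≤ (r : WithTop ℝ)} := by
    ext r
    simp only [Set.mem_setOf_eq]
    constructor
    · intro h
      exact h x.2
    · intro h h'
      exact h
  rw [specFun, hset]
  rcases eq_or_ne (f x) ⊤ with htop | hne
  · rw [htop]
    convert WithTop.sInf_empty
    rw [Set.image_eq_empty, Set.eq_empty_iff_forall_notMem]
    intro r hr
    exact (WithTop.coe_lt_top r).not_ge hr
  · obtain ⟨b, hb⟩ := WithTop.ne_top_iff_exists.1 hne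
    have hIci : {r : ℝ | f x ≤ (r : WithTop ℝ)} = Set.Ici b := by
      ext r
      rw [Set.mem_setOf_eq, ← hb, WithTop.coe_le_coe]
      rfl
    rw [hIci, ← WithTop.coe_sInf' (s := Set.Ici b) ⟨b, le_refl b⟩ bddBelow_Ici, csInf_Ici]
    exact hb

/-- The map `σ ↦ f_σ` is a bijection from the spectral families in `L(H)` onto the
observable functions on `H ∖ {0}`; moreover `f_σ` is everywhere finite iff `σ` is
bounded from above (`σ(λ₁) = H` for some `λ₁`). -/
theorem spectral_families_equiv_observable_functions
    {H : Type*} [NormedAddCommGroup H] [InnerProductSpace ℂ H] [CompleteSpace H] :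
    (∃ e : {σ : ℝ → ClosedSub H // IsSpectralFamily σ} ≃
        {f : {x : H // x ≠ 0} → WithTop ℝ // IsObservableFunction f},
      ∀ σ : {σ : ℝ → ClosedSub H // IsSpectralFamily σ},
        (e σ : {x : H // x ≠ 0} → WithTop ℝ) = fun x => specFun σ.1 x.1) ∧
    (∀ σ : ℝ → ClosedSub H, IsSpectralFamily σ →
      ((∀ x : {x : H // x ≠ 0}, specFun σ x.1 ≠ ⊤) ↔ ∃ l : ℝ, σ l = ⊤)) := by
  constructor
  · refine ⟨{ toFun := fun σ => ⟨fun x => specFun σ.1 x.1, specFun_isObservable σ.2⟩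
              invFun := fun f => ⟨obsFam f.2, obsFam_isSpectral f.2⟩
              left_inv := ?_
              right_inv := ?_ }, fun σ => rfl⟩
    · rintro ⟨σ, hσ⟩
      apply Subtype.ext
      funext r
      apply Subtype.ext
      ext x
      constructor
      · intro hx
        rcases eq_or_ne x 0 with rfl | hx0
        · exact (σ r).1.zero_mem
        · exact mem_of_specFun_le hσ hx0 (hx hx0)
      · intro hx h
        exact specFun_le_of_mem hσ h hx
    · rintro ⟨f, hf⟩
      apply Subtype.ext
      funext x
      exact specFun_obsFam hf x
  · intro σ hσ
    constructor
    · intro hfin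
      have hcover : (⋃ n : ℕ, ((σ (n : ℝ)).1 : Set H)) = Set.univ := by
        rw [Set.eq_univ_iff_forall]
        intro x
        rcases eq_or_ne x 0 with rfl | hx0
        · exact Set.mem_iUnion.2 ⟨0, (σ ((0 : ℕ) : ℝ)).1.zero_mem⟩
        · obtain ⟨r, hr⟩ := (specFun_ne_top_iff hσ hx0).1 (hfin ⟨x, hx0⟩)
          exact Set.mem_iUnion.2 ⟨⌈r⌉₊, hσ.1 r _ (Nat.le_ceil r) hr⟩
      obtain ⟨n, hn⟩ :=
        nonempty_interior_of_iUnion_of_closed (fun n : ℕ => (σ (n : ℝ)).2) hcover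
      exact ⟨n, Subtype.ext (Submodule.eq_top_of_nonempty_interior' _ hn)⟩
    · rintro ⟨l, hl⟩ x
      have hx : x.1 ∈ (σ l).1 := by
        rw [hl]
        exact Submodule.mem_top
      exact ne_top_of_le_ne_top WithTop.coe_ne_top (specFun_le_of_mem hσ x.2 hx)
end

section
/- Let M be a topological space. (a) For every continuous function f : M → ℝ, the map σ_f : ℝ → T(M), σ_f(λ) := int(f⁻¹((-∞, λ])), is a continuous spectral family in T(M); its admissible domain D(σ_f) equals M, and the function induced by σ_f equals f, i.e., inf{λ ∈ ℝ : x ∈ σ_f(λ)} = f(x) for all x ∈ M. (b) Conversely, for every continuous spectral family σ in T(M), the induced function f_σ : D(σ) → ℝ is continuous, and the spectral family induced by f_σ on the subspace D(σ) is the restriction of σ: for every λ ∈ ℝ, int_{D(σ)}(f_σ⁻¹((-∞, λ])) = σ(λ) ∩ D(σ). -/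
open TopologicalSpace

variable {M : Type*} [TopologicalSpace M]

/-- A spectral family in the lattice `T(M)` of open subsets of `M`. -/
def IsSpectralFamilyT (σ : ℝ → Opens M) : Prop :=
  (∀ l m : ℝ, l ≤ m → σ l ≤ σ m) ∧
  (∀ l : ℝ, (σ l : Set M) = interior (⋂ m ∈ Set.Ioi l, (σ m : Set M))) ∧
  interior (⋂ l : ℝ, (σ l : Set M)) = ∅ ∧
  (⋃ l : ℝ, (σ l : Set M)) = Set.univ

/-- A continuous spectral family: `closure (σ λ) ⊆ σ μ` for `λ < μ`. -/
def IsContinuousSF (σ : ℝ → Opens M) : Prop :=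
  IsSpectralFamilyT σ ∧ ∀ l m : ℝ, l < m → closure (σ l : Set M) ⊆ (σ m : Set M)

/-- The admissible domain of a spectral family in `T(M)`. -/
def admDomain (σ : ℝ → Opens M) : Set M := {x : M | ∃ l : ℝ, x ∉ σ l}

/-- The function induced by a spectral family in `T(M)`. -/
noncomputable def specFunT (σ : ℝ → Opens M) (x : M) : ℝ := sInf {l : ℝ | x ∈ σ l}

/-- The spectral family induced by a function: `σ_f(λ) = int(f⁻¹((-∞,λ]))`. -/
def funSF (f : M → ℝ) (l : ℝ) : Opens M := ⟨interior (f ⁻¹' Set.Iic l), isOpen_interior⟩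

section Aux

variable {σ : ℝ → Opens M}

lemma sf_nonempty (h : IsSpectralFamilyT σ) (x : M) : {l : ℝ | x ∈ σ l}.Nonempty := by
  have hx : x ∈ ⋃ l : ℝ, (σ l : Set M) := h.2.2.2 ▸ Set.mem_univ x
  obtain ⟨_, ⟨l, rfl⟩, hl⟩ := hx
  exact ⟨l, hl⟩

lemma sf_bddBelow (h : IsSpectralFamilyT σ) {x : M} (hx : x ∈ admDomain σ) :
    BddBelow {l : ℝ | x ∈ σ l} := by
  obtain ⟨l0, hl0⟩ := hx
  exact ⟨l0, fun m hm => le_of_not_gt fun hlt => hl0 (h.1 m l0 hlt.le hm)⟩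

lemma specFunT_le (h : IsSpectralFamilyT σ) {x : M} (hx : x ∈ admDomain σ) {l : ℝ}
    (hl : x ∈ σ l) : specFunT σ x ≤ l := csInf_le (sf_bddBelow h hx) hl

lemma mem_of_specFunT_lt (h : IsSpectralFamilyT σ) {x : M} {m : ℝ}
    (hlt : specFunT σ x < m) : x ∈ σ m := by
  obtain ⟨k, hk, hkm⟩ := exists_lt_of_csInf_lt (sf_nonempty h x) hlt
  exact h.1 k m hkm.le hk

lemma le_specFunT (h : IsSpectralFamilyT σ) {x : M} {l : ℝ} (hl : x ∉ σ l) :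
    l ≤ specFunT σ x :=
  le_csInf (sf_nonempty h x) fun m hm => le_of_not_gt fun hlt => hl (h.1 m l hlt.le hm)

lemma preimage_Iic_subset_interior {f : M → ℝ} (hf : Continuous f) {l m : ℝ} (h : l < m) :
    f ⁻¹' Set.Iic l ⊆ interior (f ⁻¹' Set.Iic m) := by
  have h1 : f ⁻¹' Set.Iio m ⊆ interior (f ⁻¹' Set.Iic m) :=
    (isOpen_Iio.preimage hf).subset_interior_iff.mpr
      (Set.preimage_mono Set.Iio_subset_Iic_self)
  exact (Set.preimage_mono (Set.Iic_subset_Iio.mpr h)).trans h1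

end Aux

/-- (a) Every continuous real function `f` on `M` induces a continuous spectral
family `σ_f` in `T(M)`, with admissible domain `M` and induced function `f`;
(b) conversely, the function induced by a continuous spectral family `σ` is
continuous on the admissible domain `D(σ)`, and the spectral family it induces on
the subspace `D(σ)` is the restriction of `σ` to `D(σ)`. -/
theorem continuous_functions_and_continuous_spectral_families
    {M : Type*} [TopologicalSpace M] :
    (∀ f : M → ℝ, Continuous f →
      IsContinuousSF (funSF f) ∧ admDomain (funSF f) = Set.univ ∧
        ∀ x : M, specFunT (funSF f) x = f x) ∧
    (∀ σ : ℝ → Opens M, IsContinuousSF σ →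
      Continuous (fun x : admDomain σ => specFunT σ (x : M)) ∧
      ∀ l : ℝ,
        interior ((fun x : admDomain σ => specFunT σ (x : M)) ⁻¹' Set.Iic l) =
          (Subtype.val ⁻¹' (σ l : Set M) : Set (admDomain σ))) := by
  constructor
  · -- part (a)
    intro f hf
    have hmem : ∀ l : ℝ, (funSF f l : Set M) = interior (f ⁻¹' Set.Iic l) := fun _ => rfl
    have hsub : ∀ l : ℝ, (funSF f l : Set M) ⊆ f ⁻¹' Set.Iic l := fun l => interior_subset
    refine ⟨⟨⟨?_, ?_, ?_, ?_⟩, ?_⟩, ?_, ?_⟩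
    · intro l m hlm
      exact interior_mono (Set.preimage_mono (Set.Iic_subset_Iic.mpr hlm))
    · intro l
      have key : (⋂ m ∈ Set.Ioi l, (funSF f m : Set M)) = f ⁻¹' Set.Iic l := by
        apply subset_antisymm
        · intro x hx
          simp only [Set.mem_iInter] at hx
          have : ∀ m, l < m → f x ≤ m := fun m hm => hsub m (hx m hm)
          exact le_of_forall_gt_imp_ge_of_dense this
        · intro x hx
          simp only [Set.mem_iInter]
          exact fun m hm => preimage_Iic_subset_interior hf hm hx
      rw [key]; rfl
    · have : (⋂ l : ℝ, (funSF f l : Set M)) = ∅ := by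
        apply Set.eq_empty_iff_forall_notMem.mpr
        intro x hx
        have := hsub (f x - 1) (Set.mem_iInter.mp hx (f x - 1))
        simp only [Set.mem_preimage, Set.mem_Iic] at this
        linarith
      rw [this, interior_empty]
    · apply Set.eq_univ_iff_forall.mpr
      intro x
      refine Set.mem_iUnion.mpr ⟨f x + 1, ?_⟩
      exact preimage_Iic_subset_interior hf (by linarith : f x < f x + 1)
        (by simp : x ∈ f ⁻¹' Set.Iic (f x))
    · intro l m hlm
      have h1 : closure (funSF f l : Set M) ⊆ f ⁻¹' Set.Iic l :=
        closure_minimal (hsub l) (isClosed_Iic.preimage hf)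
      exact h1.trans (preimage_Iic_subset_interior hf hlm)
    · apply Set.eq_univ_iff_forall.mpr
      intro x
      refine ⟨f x - 1, fun hx => ?_⟩
      have := hsub (f x - 1) hx
      simp only [Set.mem_preimage, Set.mem_Iic] at this
      linarith
    · intro x
      apply le_antisymm
      · have hIoi : Set.Ioi (f x) ⊆ {l : ℝ | x ∈ funSF f l} := fun m hm =>
          preimage_Iic_subset_interior hf hm (by simp : x ∈ f ⁻¹' Set.Iic (f x))
        have hbdd : BddBelow {l : ℝ | x ∈ funSF f l} :=
          ⟨f x, fun m hm => (hsub m hm : f x ≤ m)⟩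
        calc sInf {l : ℝ | x ∈ funSF f l} ≤ sInf (Set.Ioi (f x)) :=
              csInf_le_csInf hbdd ⟨f x + 1, by simp⟩ hIoi
          _ = f x := csInf_Ioi
      · exact le_csInf ⟨f x + 1, preimage_Iic_subset_interior hf (by linarith)
          (by simp : x ∈ f ⁻¹' Set.Iic (f x))⟩ fun m hm => (hsub m hm : f x ≤ m)
  · -- part (b)
    intro σ hσ
    obtain ⟨hS, hc⟩ := hσ
    set g : admDomain σ → ℝ := fun x => specFunT σ (x : M) with hg
    constructor
    · -- continuity
      rw [(inferInstance : OrderTopology ℝ).topology_eq_generate_intervals,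
        continuous_generateFrom_iff]
      rintro s ⟨a, rfl | rfl⟩
      · -- Ioi a
        have : g ⁻¹' Set.Ioi a =
            Subtype.val ⁻¹' (⋃ m ∈ Set.Ioi a, (closure (σ m : Set M))ᶜ) := by
          ext ⟨x, hx⟩
          simp only [Set.mem_preimage, Set.mem_Ioi, Set.mem_iUnion, Set.mem_compl_iff,
            exists_prop]
          constructor
          · intro h
            set d := g ⟨x, hx⟩ - a with hd
            have hd0 : 0 < d := by simpa [hd] using h
            refine ⟨a + d / 3, by linarith, fun hclo => ?_⟩
            have hmem : x ∈ σ (a + 2 * d / 3) := hc _ _ (by linarith) hclo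
            have := specFunT_le hS hx hmem
            simp only [hg] at hd
            linarith
          · rintro ⟨m, ham, hm⟩
            have hnot : x ∉ σ m := fun h => hm (subset_closure h)
            exact lt_of_lt_of_le ham (le_specFunT hS hnot)
        rw [this]
        exact (isOpen_biUnion fun m _ => isClosed_closure.isOpen_compl).preimage
          continuous_subtype_val
      · -- Iio a
        have : g ⁻¹' Set.Iio a =
            Subtype.val ⁻¹' (⋃ m ∈ Set.Iio a, (σ m : Set M)) := by
          ext ⟨x, hx⟩
          simp only [Set.mem_preimage, Set.mem_Iio, Set.mem_iUnion, exists_prop]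
          constructor
          · intro h
            obtain ⟨k, hk, hka⟩ := exists_lt_of_csInf_lt (sf_nonempty hS x) h
            exact ⟨k, hka, hk⟩
          · rintro ⟨m, hma, hm⟩
            exact lt_of_le_of_lt (specFunT_le hS hx hm) hma
        rw [this]
        exact (isOpen_biUnion fun m _ => (σ m).isOpen).preimage continuous_subtype_val
    · -- restriction
      intro l
      apply subset_antisymm
      · -- interior ⊆ val ⁻¹' σ l
        obtain ⟨V, hVopen, hV⟩ := isOpen_induced_iff.mp
          (isOpen_interior (s := g ⁻¹' Set.Iic l))
        intro x hx
        have hxV : (x : M) ∈ V := by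
          rw [← hV] at hx; exact hx
        have hVsub : V ⊆ ⋂ m ∈ Set.Ioi l, (σ m : Set M) := by
          intro y hy
          simp only [Set.mem_iInter]
          intro m hm
          by_cases hyD : y ∈ admDomain σ
          · have : (⟨y, hyD⟩ : admDomain σ) ∈ Subtype.val ⁻¹' V := hy
            rw [hV] at this
            have hle : g ⟨y, hyD⟩ ≤ l := interior_subset (s := g ⁻¹' Set.Iic l) this
            exact mem_of_specFunT_lt hS (lt_of_le_of_lt hle hm)
          · simp only [admDomain, Set.mem_setOf_eq, not_exists, not_not] at hyD
            exact hyD m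
        have : V ⊆ interior (⋂ m ∈ Set.Ioi l, (σ m : Set M)) :=
          hVopen.subset_interior_iff.mpr hVsub
        have hxl : (x : M) ∈ (σ l : Set M) := by
          rw [hS.2.1 l]; exact this hxV
        exact hxl
      · -- val ⁻¹' σ l ⊆ interior
        apply interior_maximal
        · intro x hx
          exact specFunT_le hS x.2 hx
        · exact (σ l).isOpen.preimage continuous_subtype_val
end
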